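/- arXiv:2206.13277 — 2 statements merged into one kernel-verified Lean document; each statement's English description precedes it below -/
import Mathlib

section
/- The k-th derivative in s of g(s,t) = 2λ_P[ |t-a| e^{λ_d β(t)(s-1)} - (t+a) + (e^{λ_d(s-1)β(t)}-1)/(λ_d(s-1)) ] for s ≠ 1 equals 2λ_P[ (λ_d β(t))^k |t-a| e^{(s-1)λ_d β(t)} + (1/λ_d)( Σ_{j=0}^{k} C(k,j) j!(-1)^j (s-1)^{-(j+1)} (λ_d β(t))^{k-j} e^{(s-1)λ_d β(t)} − k!(-1)^k (s-1)^{-(k+1)} ) ]. -/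
/-! By the Leibniz rule, the `n`-th derivative of `e^{cx} · x⁻¹` is
`∑ C(n,j) (x⁻¹)^{(j)} c^{n-j} e^{cx}` with `(x⁻¹)^{(j)} = (-1)^j j! / x^{j+1}`; the term `-1/x`
contributes `-(-1)^n n!/x^{n+1}` and the constant `-(t+a)` disappears since `k ≥ 1`.
The claim is this computation at `x = s - 1`, `c = λ_d β(t)`, after writing
`1/(λ_d (s-1)) = λ_d⁻¹ · (s-1)⁻¹`. -/

open Real Finset Nat

theorem iteratedDeriv_inv {𝕜 : Type*} [NontriviallyNormedField 𝕜] (n : ℕ) (x : 𝕜) :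
    iteratedDeriv n (·⁻¹) x = (-1) ^ n * n ! / x ^ (n + 1) := by
  rw [iteratedDeriv_eq_iterate, iter_deriv_inv, div_eq_mul_inv, ← zpow_natCast x, ← zpow_neg]
  congr 2
  push_cast
  ring

theorem iteratedDeriv_exp_const_mul_div {c x : ℝ} (n : ℕ) (hx : x ≠ 0) :
    iteratedDeriv n (fun y => exp (c * y) / y) x =
      ∑ j ∈ range (n + 1), (n.choose j : ℝ) * j ! * (-1) ^ j / x ^ (j + 1)
        * c ^ (n - j) * exp (c * x) := by
  simp only [div_eq_inv_mul]
  rw [iteratedDeriv_fun_mul (contDiffAt_inv ℝ hx) (by fun_prop)]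
  refine sum_congr rfl fun j _ => ?_
  rw [iteratedDeriv_inv, iteratedDeriv_exp_const_mul]
  ring

theorem iteratedDeriv_exp_const_mul_sub_one_div {c x : ℝ} (n : ℕ) (hx : x ≠ 0) :
    iteratedDeriv n (fun y => (exp (c * y) - 1) / y) x =
      ∑ j ∈ range (n + 1), (n.choose j : ℝ) * j ! * (-1) ^ j / x ^ (j + 1)
        * c ^ (n - j) * exp (c * x) - (-1) ^ n * n ! / x ^ (n + 1) := by
  simp only [sub_div, one_div]
  have hdiv : ContDiffAt ℝ n (fun y => exp (c * y) / y) x := by fun_prop (disch := exact hx)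
  rw [iteratedDeriv_fun_sub hdiv (contDiffAt_inv ℝ hx), iteratedDeriv_exp_const_mul_div n hx,
    iteratedDeriv_inv]

theorem iteratedDeriv_exp_sub_const_add_exp_sub_one_div {A b c d K x : ℝ} {n : ℕ} (hn : n ≠ 0)
    (hx : x ≠ 0) :
    iteratedDeriv n (fun y => A * (b * exp (c * y) - K + d * ((exp (c * y) - 1) / y))) x =
      A * (b * (c ^ n * exp (c * x)) + d * (∑ j ∈ range (n + 1), (n.choose j : ℝ) * j ! * (-1) ^ j
        / x ^ (j + 1) * c ^ (n - j) * exp (c * x) - (-1) ^ n * n ! / x ^ (n + 1))) := by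
  simp only [sub_eq_add_neg (b * _), add_right_comm _ (-K)]
  rw [iteratedDeriv_const_mul_field, iteratedDeriv_fun_add (by fun_prop) (by fun_prop),
    iteratedDeriv_fun_add (by fun_prop) (by fun_prop), iteratedDeriv_const_mul_field,
    iteratedDeriv_const_mul_field, iteratedDeriv_exp_const_mul, iteratedDeriv_const, if_neg hn,
    iteratedDeriv_exp_const_mul_sub_one_div n hx, add_zero]

theorem iteratedDeriv_exp_sub_const_add_exp_sub_one_div_comp_sub {A b c d K s₀ s : ℝ} {n : ℕ}
    (hn : n ≠ 0) (hs : s ≠ s₀) :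
    iteratedDeriv n (fun s => A * (b * exp (c * (s - s₀)) - K
        + d * ((exp (c * (s - s₀)) - 1) / (s - s₀)))) s =
      A * (b * (c ^ n * exp (c * (s - s₀))) + d * (∑ j ∈ range (n + 1), (n.choose j : ℝ) * j !
        * (-1) ^ j / (s - s₀) ^ (j + 1) * c ^ (n - j) * exp (c * (s - s₀))
        - (-1) ^ n * n ! / (s - s₀) ^ (n + 1))) :=
  (congrFun (iteratedDeriv_comp_sub_const n
    (fun y => A * (b * exp (c * y) - K + d * ((exp (c * y) - 1) / y))) s₀) s).trans
    (iteratedDeriv_exp_sub_const_add_exp_sub_one_div hn (sub_ne_zero.mpr hs))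

theorem stmt2_general (lamP lamd a t : ℝ) (k : ℕ) (hk : 1 ≤ k) (s : ℝ) (hs : s ≠ 1) :
    iteratedDeriv k
      (fun s : ℝ => 2 * lamP * (|t - a| * Real.exp (lamd * (2 * min t a) * (s - 1))
        - (t + a)
        + (Real.exp (lamd * (s - 1) * (2 * min t a)) - 1) / (lamd * (s - 1)))) s =
    2 * lamP * ((lamd * (2 * min t a)) ^ k * |t - a|
        * Real.exp ((s - 1) * lamd * (2 * min t a))
      + (1 / lamd) *
        ((∑ j ∈ Finset.range (k + 1),
            (Nat.choose k j : ℝ) * (Nat.factorial j : ℝ) * (-1) ^ j / (s - 1) ^ (j + 1)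
              * (lamd * (2 * min t a)) ^ (k - j)
              * Real.exp ((s - 1) * lamd * (2 * min t a)))
          - (Nat.factorial k : ℝ) * (-1) ^ k / (s - 1) ^ (k + 1))) := by
  have hg : (fun s : ℝ => 2 * lamP * (|t - a| * exp (lamd * (2 * min t a) * (s - 1)) - (t + a)
        + (exp (lamd * (s - 1) * (2 * min t a)) - 1) / (lamd * (s - 1))))
      = fun s => 2 * lamP * (|t - a| * exp (lamd * (2 * min t a) * (s - 1)) - (t + a)
        + lamd⁻¹ * ((exp (lamd * (2 * min t a) * (s - 1)) - 1) / (s - 1))) := by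
    funext s
    rw [mul_right_comm lamd, mul_comm lamd (s - 1), ← div_div]
    ring
  rw [hg, iteratedDeriv_exp_sub_const_add_exp_sub_one_div_comp_sub (by omega) hs]
  ring_nf

/-- For `s ≠ 1`, the `k`-th derivative in `s` of
`g(s,t) = 2λP[ |t-a| e^{λd β(t)(s-1)} - (t+a) + (e^{λd(s-1)β(t)}-1)/(λd(s-1)) ]`
equals
`2λP[ (λd β(t))^k |t-a| e^{(s-1)λd β(t)}
  + (1/λd)( Σ_{j=0}^{k} C(k,j) j! (-1)^j (s-1)^{-(j+1)} (λd β(t))^{k-j} e^{(s-1)λd β(t)}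
    - k! (-1)^k (s-1)^{-(k+1)} ) ]`, with `β(t) = 2 min(t,a)`. -/
theorem stmt2 (lamP lamd a t : ℝ) (k : ℕ)
    (hP : 0 < lamP) (hd : 0 < lamd) (ha : 0 < a) (ht : 0 < t) (hk : 1 ≤ k)
    (s : ℝ) (hs : s ≠ 1) :
    iteratedDeriv k
      (fun s : ℝ => 2 * lamP * (|t - a| * Real.exp (lamd * (2 * min t a) * (s - 1))
        - (t + a)
        + (Real.exp (lamd * (s - 1) * (2 * min t a)) - 1) / (lamd * (s - 1)))) s =
    2 * lamP * ((lamd * (2 * min t a)) ^ k * |t - a|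
        * Real.exp ((s - 1) * lamd * (2 * min t a))
      + (1 / lamd) *
        ((∑ j ∈ Finset.range (k + 1),
            (Nat.choose k j : ℝ) * (Nat.factorial j : ℝ) * (-1) ^ j / (s - 1) ^ (j + 1)
              * (lamd * (2 * min t a)) ^ (k - j)
              * Real.exp ((s - 1) * lamd * (2 * min t a)))
          - (Nat.factorial k : ℝ) * (-1) ^ k / (s - 1) ^ (k + 1))) :=
  stmt2_general lamP lamd a t k hk s hs
end

section
/- The partial derivative of v_i(l_i) = r(l_i)² (π − α_i(l_i) + ½ sin 2α_i(l_i)) with respect to l_i equals 2(l_i + y cos θ)(π − α_i(l_i)) + 2 y sin θ for the case i = 2 (and analogously 2(l₁ − y cos θ)(π − α₁(l₁)) + 2 y sin θ for i = 1), where r(l₁) = √(l₁² + y² − 2 l₁ y cos θ), cos α₁(l₁) = (l₁ − y cos θ)/r(l₁), r(l₂) = √(l₂² + y² + 2 l₂ y cos θ), cos α₂(l₂) = (l₂ + y cos θ)/r(l₂). -/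
/-!
Write `u = l ± y cos θ` and `b = y sin θ`, so that `r² = u² + b²` and `cos α = u / r`,
`sin α = b / r`. Then `½ r² sin 2α = u b`, hence `v = r² (π - α) + u b`, and `α = π/2 - arctan (u / b)`
has derivative `-b / r²`. The product rule gives `v' = 2u (π - α) + b + b`.
-/

open Real

/-- Disk of radius `√(u² + b²)` minus the circular segment cut off by a chord of half-length `b`
at distance `u` from the centre; `arccos (u / √(u² + b²))` is the half-angle of that segment. -/
noncomputable def diskMinusSegmentArea (b u : ℝ) : ℝ :=
  √(u ^ 2 + b ^ 2) ^ 2 *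
    (π - arccos (u / √(u ^ 2 + b ^ 2)) + 1 / 2 * sin (2 * arccos (u / √(u ^ 2 + b ^ 2))))

lemma abs_div_sqrt_sq_add_sq_lt_one {b : ℝ} (hb : b ≠ 0) (u : ℝ) :
    |u / √(u ^ 2 + b ^ 2)| < 1 := by
  have hr : 0 < √(u ^ 2 + b ^ 2) := sqrt_pos.mpr (by positivity)
  rw [abs_div, abs_of_pos hr, div_lt_one hr, ← sqrt_sq_eq_abs]
  exact sqrt_lt_sqrt (sq_nonneg u) (by simpa using pow_pos (abs_pos.mpr hb) 2)

lemma sqrt_one_sub_sq_div_sqrt_sq_add_sq {b : ℝ} (hb : 0 < b) (u : ℝ) :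
    √(1 - (u / √(u ^ 2 + b ^ 2)) ^ 2) = b / √(u ^ 2 + b ^ 2) := by
  have hq : 0 < u ^ 2 + b ^ 2 := by positivity
  have : 1 - (u / √(u ^ 2 + b ^ 2)) ^ 2 = b ^ 2 / (u ^ 2 + b ^ 2) := by
    rw [div_pow, sq_sqrt hq.le]
    field_simp
    ring
  rw [this, sqrt_div (sq_nonneg b), sqrt_sq hb.le]

lemma arccos_div_sqrt_sq_add_sq_eq_pi_div_two_sub_arctan {b : ℝ} (hb : 0 < b) (u : ℝ) :
    arccos (u / √(u ^ 2 + b ^ 2)) = π / 2 - arctan (u / b) := by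
  have hs : √(1 + (u / b) ^ 2) = √(u ^ 2 + b ^ 2) / b := by
    rw [eq_div_iff hb.ne', ← sqrt_sq hb.le, ← sqrt_mul (by positivity), sqrt_sq hb.le]
    congr 1
    field_simp
    ring
  rw [arctan_eq_arcsin, arccos_eq_pi_div_two_sub_arcsin, hs, div_div_div_cancel_right₀ hb.ne']

lemma hasDerivAt_arccos_div_sqrt_sq_add_sq {b : ℝ} (hb : 0 < b) (u : ℝ) :
    HasDerivAt (fun u => arccos (u / √(u ^ 2 + b ^ 2))) (-(b / (u ^ 2 + b ^ 2))) u := by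
  simp only [arccos_div_sqrt_sq_add_sq_eq_pi_div_two_sub_arctan hb]
  refine (((hasDerivAt_id' u).div_const b).arctan.const_sub (π / 2)).congr_deriv ?_
  field_simp
  ring

lemma diskMinusSegmentArea_eq {b : ℝ} (hb : 0 < b) (u : ℝ) :
    diskMinusSegmentArea b u = (u ^ 2 + b ^ 2) * (π - arccos (u / √(u ^ 2 + b ^ 2))) + u * b := by
  have hq : 0 < u ^ 2 + b ^ 2 := by positivity
  obtain ⟨hlo, hhi⟩ := abs_lt.mp (abs_div_sqrt_sq_add_sq_lt_one hb.ne' u)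
  rw [diskMinusSegmentArea, sin_two_mul, sin_arccos, cos_arccos hlo.le hhi.le,
    sqrt_one_sub_sq_div_sqrt_sq_add_sq hb, sq_sqrt hq.le]
  field_simp
  linear_combination -(u * b) * sq_sqrt hq.le

lemma hasDerivAt_diskMinusSegmentArea {b : ℝ} (hb : 0 < b) (u : ℝ) :
    HasDerivAt (diskMinusSegmentArea b)
      (2 * u * (π - arccos (u / √(u ^ 2 + b ^ 2))) + 2 * b) u := by
  rw [funext (diskMinusSegmentArea_eq hb)]
  refine ((((hasDerivAt_pow 2 u).add_const (b ^ 2)).mul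
    ((hasDerivAt_arccos_div_sqrt_sq_add_sq hb u).const_sub π)).add
    ((hasDerivAt_id' u).mul_const b)).congr_deriv ?_
  field_simp
  ring

/-- With `r(l₁) = √(l₁²+y²-2l₁y cos θ)`,
`α₁(l₁) = arccos((l₁ - y cos θ)/r(l₁))`, `r(l₂) = √(l₂²+y²+2l₂y cos θ)`,
`α₂(l₂) = arccos((l₂ + y cos θ)/r(l₂))`, and
`v_i(l) = r(l)² (π - α_i(l) + ½ sin 2α_i(l))`, one has
`v₂'(l₂) = 2(l₂ + y cos θ)(π - α₂(l₂)) + 2 y sin θ` and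
`v₁'(l₁) = 2(l₁ - y cos θ)(π - α₁(l₁)) + 2 y sin θ`. -/
theorem stmt13 (y θ : ℝ) (hy : 0 < y) (hθ : θ ∈ Set.Ioo (0:ℝ) π) :
    (∀ l : ℝ, 0 < l →
      HasDerivAt (fun l : ℝ =>
          Real.sqrt (l ^ 2 + y ^ 2 + 2 * l * y * Real.cos θ) ^ 2 *
            (π - Real.arccos ((l + y * Real.cos θ) /
                Real.sqrt (l ^ 2 + y ^ 2 + 2 * l * y * Real.cos θ))
              + 1 / 2 * Real.sin (2 * Real.arccos ((l + y * Real.cos θ) /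
                  Real.sqrt (l ^ 2 + y ^ 2 + 2 * l * y * Real.cos θ)))))
        (2 * (l + y * Real.cos θ) *
            (π - Real.arccos ((l + y * Real.cos θ) /
              Real.sqrt (l ^ 2 + y ^ 2 + 2 * l * y * Real.cos θ)))
          + 2 * y * Real.sin θ) l) ∧
    (∀ l : ℝ, 0 < l →
      HasDerivAt (fun l : ℝ =>
          Real.sqrt (l ^ 2 + y ^ 2 - 2 * l * y * Real.cos θ) ^ 2 *
            (π - Real.arccos ((l - y * Real.cos θ) /
                Real.sqrt (l ^ 2 + y ^ 2 - 2 * l * y * Real.cos θ))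
              + 1 / 2 * Real.sin (2 * Real.arccos ((l - y * Real.cos θ) /
                  Real.sqrt (l ^ 2 + y ^ 2 - 2 * l * y * Real.cos θ)))))
        (2 * (l - y * Real.cos θ) *
            (π - Real.arccos ((l - y * Real.cos θ) /
              Real.sqrt (l ^ 2 + y ^ 2 - 2 * l * y * Real.cos θ)))
          + 2 * y * Real.sin θ) l) := by
  have hb : 0 < y * sin θ := mul_pos hy (sin_pos_of_pos_of_lt_pi hθ.1 hθ.2)
  have hplus (l : ℝ) : l ^ 2 + y ^ 2 + 2 * l * y * cos θ = (l + y * cos θ) ^ 2 + (y * sin θ) ^ 2 := by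
    linear_combination -y ^ 2 * sin_sq_add_cos_sq θ
  have hminus (l : ℝ) : l ^ 2 + y ^ 2 - 2 * l * y * cos θ = (l - y * cos θ) ^ 2 + (y * sin θ) ^ 2 := by
    linear_combination -y ^ 2 * sin_sq_add_cos_sq θ
  refine ⟨fun l _ => ?_, fun l _ => ?_⟩
  · simp only [hplus, mul_assoc 2 y]
    exact (hasDerivAt_diskMinusSegmentArea hb _).comp_add_const l _
  · simp only [hminus, mul_assoc 2 y]
    exact (hasDerivAt_diskMinusSegmentArea hb _).comp_sub_const l _
end
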